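/- Fix integers N₁ ≥ N₂ ≥ ⋯ ≥ N_{k−1} ≥ 0. For k > i ≥ 2 and all n, the number G̃_{N₁,…,N_{k−1};i}(n) of overpartitions counted by G̃_{k,i}(m,n) (with m = N₁+⋯+N_{k−1}) whose Gordon marking has exactly N_r r-marked parts for 1 ≤ r ≤ k−1 equals H̃_{N₁,…,N_{k−1};i−1}(n), defined analogously from H̃_{k,i−1}. For k > i = 1, G̃_{N₁,…,N_{k−1};1}(n) = H̃_{N₁,…,N_{k−1};k−1}(n − N₁ − ⋯ − N_{k−1}). -/

import Mathlib

open scoped BigOperators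

/-- A part of an overpartition: its size, and whether it is overlined. -/
abbrev OPart := ℕ × Bool

/-- An overpartition: `f t` is the number of non-overlined parts equal to `t`, and
`fbar t` is the number of overlined parts equal to `t` (at most one, since only the
first occurrence of a number may be overlined).  There are no parts of size `0`. -/
structure Overpartition where
  f : ℕ →₀ ℕ
  fbar : ℕ →₀ ℕ
  fbar_le_one : ∀ t, fbar t ≤ 1
  f_zero : f 0 = 0
  fbar_zero : fbar 0 = 0

namespace Overpartition

/-- the number of parts -/
def parts (l : Overpartition) : ℕ :=
  l.f.sum (fun _ m => m) + l.fbar.sum (fun _ m => m)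

/-- weight: the sum of all parts -/
def wt (l : Overpartition) : ℕ :=
  l.f.sum (fun t m => t * m) + l.fbar.sum (fun t m => t * m)

/-- `V l s`: the number of overlined parts of size at most `s` -/
def V (l : Overpartition) (s : ℕ) : ℕ := ∑ t ∈ Finset.Icc 1 s, l.fbar t

end Overpartition

/-- The difference/congruence conditions defining `Õ_{k,i}`. -/
def OCond (k i : ℕ) (l : Overpartition) : Prop :=
  (l.fbar 1 + l.f 2 ≤ i - 1) ∧
  (∀ t, 1 ≤ t → l.f (2*t) + l.fbar (2*t) + l.fbar (2*t+1) + l.f (2*t+2) ≤ k - 1) ∧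
  (∀ t, 1 ≤ l.f (2*t+1) → l.f (2*t+2) ≤ k - 2) ∧
  (∀ t, 1 ≤ t → l.f (2*t) + l.fbar (2*t) + l.fbar (2*t+1) + l.f (2*t+2) = k - 1 →
    t * l.f (2*t) + t * l.fbar (2*t) + t * l.fbar (2*t+1) + (t+1) * l.f (2*t+2)
      ≡ l.V (2*t+1) + i - 1 [MOD 2]) ∧
  (∀ t, 1 ≤ l.f (2*t+1) → l.f (2*t+2) = k - 2 →
    t + (t+1) * l.f (2*t+2) ≡ l.V (2*t+1) + i - 1 [MOD 2])

/-- Non-overlined parts are not congruent to `0, ±(2i-1)` modulo `4k-4`. -/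
def PCond (k i : ℕ) (l : Overpartition) : Prop :=
  ∀ t, 0 < l.f t →
    ¬ t ≡ 0 [MOD 4*k-4] ∧ ¬ t ≡ 2*i-1 [MOD 4*k-4] ∧ ¬ t ≡ 4*k-3-2*i [MOD 4*k-4]

/-- The difference/congruence conditions defining `Ẽ_{k,i}`. -/
def ECond (k i : ℕ) (l : Overpartition) : Prop :=
  l.f 1 ≤ i - 1 ∧
  (∀ t, 1 ≤ t → l.f t + l.fbar t + l.f (t+1) ≤ k - 1) ∧
  (∀ t, 1 ≤ t → l.f t + l.fbar t + l.f (t+1) = k - 1 →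
    t * l.f t + t * l.fbar t + (t+1) * l.f (t+1) ≡ l.V t + i - 1 [MOD 2])

/-- the smallest part (in the order `1̄ < 1 < 2̄ < 2 < ⋯`) exists and is non-overlined -/
def SmallestNonOverlined (l : Overpartition) : Prop :=
  ∃ s, 0 < l.f s ∧ l.fbar s = 0 ∧ ∀ t < s, l.f t = 0 ∧ l.fbar t = 0

/-- the smallest part (in the order `1̄ < 1 < 2̄ < 2 < ⋯`) exists and is overlined -/
def SmallestOverlined (l : Overpartition) : Prop :=
  ∃ s, 0 < l.fbar s ∧ ∀ t < s, l.f t = 0 ∧ l.fbar t = 0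

def NoOverlined (l : Overpartition) : Prop := ∀ t, l.fbar t = 0

def NoOdd (l : Overpartition) : Prop := ∀ t, t % 2 = 1 → l.f t = 0 ∧ l.fbar t = 0

/-- the list of the parts of sizes `1,…,B` in increasing order
(`1̄ < 1 < 2̄ < 2 < ⋯`); an overlined part is `(t, true)`. -/
def partsListUpTo (l : Overpartition) (B : ℕ) : List OPart :=
  (List.range B).flatMap (fun t =>
    (if l.fbar (t+1) = 1 then [((t+1 : ℕ), true)] else []) ++
    List.replicate (l.f (t+1)) ((t+1 : ℕ), false))

def obound (l : Overpartition) : ℕ := (l.f.support ∪ l.fbar.support).sup id + 1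

/-- the list of all parts of `l` in increasing order -/
def partsList (l : Overpartition) : List OPart := partsListUpTo l (obound l)

/-- the multiset of parts of `l` -/
def partsMS (l : Overpartition) : Multiset OPart := (partsList l : Multiset OPart)

/-- the least positive integer not belonging to `S` -/
def mex1 (S : Finset ℕ) : ℕ :=
  ((List.range (S.sup id + 2)).filter (fun r => decide (1 ≤ r ∧ r ∉ S))).headI

/-- the set of marks used by the already-marked parts satisfying `test` -/
def marksWhere (acc : List (OPart × ℕ)) (test : OPart → Bool) : Finset ℕ :=
  ((acc.filter (fun q => test q.1)).map (fun q => q.2)).toFinset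

/-- process the parts in increasing order, assigning to each one the mark
computed by `markOf` from the previously marked parts -/
def markFold (markOf : List (OPart × ℕ) → OPart → ℕ) :
    List OPart → List (OPart × ℕ) → List (OPart × ℕ)
  | [], acc => acc
  | p :: rest, acc => markFold markOf rest (acc ++ [(p, markOf acc p)])

/-- The Gordon marking rule: each part gets the smallest possible mark subject to:
(i) if `\overline{t+1}` is not a part, then all parts `t`, `t̄`, `t+1` get distinct
marks; (ii) if `\overline{t+1}` is a part, then the smallest mark assigned to a part
`t` or `t̄` may be reused for `t+1` or `\overline{t+1}`. -/
def gordonMarkOf (l : Overpartition) (acc : List (OPart × ℕ)) (p : OPart) : ℕ :=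
  let same := marksWhere acc (fun q => decide (q.1 = p.1))
  let prev := marksWhere acc (fun q => decide (q.1 + 1 = p.1))
  if l.fbar p.1 = 1 then
    mex1 (same ∪ (if h : prev.Nonempty then prev.erase (prev.min' h) else prev))
  else mex1 (same ∪ prev)

/-- the Gordon marking of `l`: the list of parts in increasing order with their marks -/
def gordonMarked (l : Overpartition) : List (OPart × ℕ) :=
  markFold (gordonMarkOf l) (partsList l) []

/-- `N_r`: the number of `r`-marked parts in the Gordon marking -/
def gordonN (l : Overpartition) (r : ℕ) : ℕ :=
  ((gordonMarked l).filter (fun q => decide (q.2 = r))).length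

/-- The Göllnitz–Gordon marking rule (Definition 5.1): non-overlined odd and
overlined even parts get mark 1; an overlined odd part `\overline{2j+1}` gets the
smallest mark different from those of `2j`, `\overline{2j}`; a non-overlined even part
`2j+2` gets the smallest mark different from earlier equal parts and, in case (b),
from the marks of `2j`, `\overline{2j}`, `\overline{2j+1}`; in case (c) it may not get
mark 1 and may reuse the smallest mark assigned to `2j` or `\overline{2j+1}`. -/
def ggMarkOf (l : Overpartition) (acc : List (OPart × ℕ)) (p : OPart) : ℕ :=
  if p.1 % 2 = 1 ∧ p.2 = false then 1
  else if p.1 % 2 = 0 ∧ p.2 = true then 1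
  else if p.1 % 2 = 1 then
    mex1 (marksWhere acc (fun q => decide (q.1 = p.1 - 1)))
  else
    let same := marksWhere acc (fun q => decide (q.1 = p.1))
    let lower := marksWhere acc
      (fun q => decide (q.1 = p.1 - 2 ∨ (q.1 = p.1 - 1 ∧ q.2 = true)))
    if 1 ∈ lower ∨ (l.f (p.1 - 1) = 0 ∧ l.fbar p.1 = 0) then
      mex1 (same ∪ lower)
    else
      mex1 (insert 1 same ∪ (if h : lower.Nonempty then lower.erase (lower.min' h) else lower))

/-- the Göllnitz–Gordon marking of `l` -/
def ggMarked (l : Overpartition) : List (OPart × ℕ) :=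
  markFold (ggMarkOf l) (partsList l) []

/-- `N_r`: the number of `r`-marked parts in the Göllnitz–Gordon marking -/
def ggN (l : Overpartition) (r : ℕ) : ℕ :=
  ((ggMarked l).filter (fun q => decide (q.2 = r))).length
/-- the 1-marked parts `λ^{(1)}_1 ≥ λ^{(1)}_2 ≥ ⋯` of the Göllnitz–Gordon marking,
in decreasing order (so index `j-1` holds `λ^{(1)}_j`) -/
def oneMarkedDesc (l : Overpartition) : List OPart :=
  (((ggMarked l).filter (fun q => decide (q.2 = 1))).map (fun q => q.1)).reverse

/-- the multiset of marked parts of a cluster: its `b`-th entry (0-indexed) is `(b+1)`-marked -/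
def clusterMS (c : List OPart) : Multiset (OPart × ℕ) :=
  ((c.zipIdx.map (fun q => (q.1, q.2 + 1))) : List (OPart × ℕ))

/-- there is a part of size `s` with mark `m` in the marked list `L` -/
def ExistsMarkedAt (L : List (OPart × ℕ)) (s m : ℕ) : Prop :=
  ∃ q ∈ L, q.1.1 = s ∧ q.2 = m

/-- conditions (i)–(iii) for the entry `y` (of mark `b+2`) following the entry `x`
(of mark `b+1`, i.e. 0-indexed position `b`) in a cluster -/
def chainStep (L : List (OPart × ℕ)) (b : ℕ) (x y : OPart) : Prop :=
  (x.1 % 2 = 1 → y.1 = x.1 + 1) ∧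
  (x.1 % 2 = 0 →
    (¬ ExistsMarkedAt L (x.1 + 2) (b + 1) → x.1 ≤ y.1 ∧ y.1 ≤ x.1 + 2) ∧
    (ExistsMarkedAt L (x.1 + 2) (b + 1) → x.1 ≤ y.1 ∧ y.1 ≤ x.1 + 1))

/-- cases (a), (b): the `j`-cluster is forced to be the singleton `λ^{(1)}_j` -/
def ForcedSingleton (one : List OPart) (j : ℕ) : Prop :=
  2 ≤ j ∧ ∃ cur prev, one[j-1]? = some cur ∧ one[j-2]? = some prev ∧
    (cur.1 = prev.1 ∨ (cur.1 % 2 = 1 ∧ prev.1 = cur.1 + 1))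

/-- `α` is the decomposition of the Göllnitz–Gordon marking of `l` into clusters
`α^{(N₁)}, …, α^{(1)}`: the `j`-cluster starts with the `j`-th largest 1-marked part,
the clusters partition the marked parts, forced singletons are singletons, consecutive
entries of a cluster obey conditions (i)–(iii), and each non-singleton-forced cluster
is a maximal such chain. -/
def IsClusterDecomp (l : Overpartition) (α : ℕ → List OPart) : Prop :=
  (∀ j, j = 0 ∨ ggN l 1 < j → α j = []) ∧
  (∀ j, 1 ≤ j → j ≤ ggN l 1 → (α j).head? = (oneMarkedDesc l)[j-1]?) ∧
  ((ggMarked l : Multiset (OPart × ℕ)) = ∑ j ∈ Finset.Icc 1 (ggN l 1), clusterMS (α j)) ∧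
  (∀ j, ForcedSingleton (oneMarkedDesc l) j → (α j).length = 1) ∧
  (∀ j b x y, (α j)[b]? = some x → (α j)[b+1]? = some y → chainStep (ggMarked l) b x y) ∧
  (∀ j, 1 ≤ j → j ≤ ggN l 1 → ¬ ForcedSingleton (oneMarkedDesc l) j →
    ∀ last, (α j).getLast? = some last →
      ¬ ∃ p : OPart,
        ((p, (α j).length + 1) ∈
          ((ggMarked l : Multiset (OPart × ℕ)) - ∑ j' ∈ Finset.Icc j (ggN l 1), clusterMS (α j'))) ∧
        chainStep (ggMarked l) ((α j).length - 1) last p)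

/-- the set `β(j)` (of 0-indexed positions): positions `c` such that
`|β_c^{(j)}| − |β_c^{(j+1)}| ≤ 2`, with strict inequality if either part is odd -/
def BetaIdx (α : ℕ → List OPart) (j : ℕ) : Set ℕ :=
  {c | ∃ x y, (α j)[c]? = some x ∧ (α (j+1))[c]? = some y ∧
     (x.1 : ℤ) - (y.1 : ℤ) ≤ 2 ∧ ((x.1 % 2 = 1 ∨ y.1 % 2 = 1) → (x.1 : ℤ) - (y.1 : ℤ) < 2)}

/-- `ν'` is obtained from `ν` by the second dilation of `p`-th kind: the odd part
`old` of the cluster `β^{(p)}` is replaced by the even part of size `|old|+1` with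
opposite overline status; when `p > 1` (in which case `β^{(p-1)}` must have no odd
part), additionally one part `chosen` of `β^{(p-1)}` — the entry indexed by the set
`β(p-1)` if it is nonempty, and otherwise the part of `β^{(p-1)}` of smallest size
and largest mark — is replaced by the part of size `|chosen|+1` with opposite
overline status. -/
def SecondDilationRel (ν ν' : Overpartition) (p : ℕ) : Prop :=
  ∃ α : ℕ → List OPart, IsClusterDecomp ν α ∧ 1 ≤ p ∧ p ≤ ggN ν 1 ∧
    ∃ old ∈ α p, old.1 % 2 = 1 ∧
      ((p = 1 ∧ partsMS ν' = (partsMS ν).erase old + {(old.1 + 1, !old.2)}) ∨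
       (1 < p ∧ (∀ q ∈ α (p-1), q.1 % 2 = 0) ∧
        ∃ c chosen, (α (p-1))[c]? = some chosen ∧
          ((BetaIdx α (p-1) = ∅ ∧ (∀ q ∈ α (p-1), chosen.1 ≤ q.1) ∧
             (∀ c' q, c < c' → (α (p-1))[c']? = some q → chosen.1 < q.1)) ∨
           c ∈ BetaIdx α (p-1)) ∧
          partsMS ν' = ((partsMS ν).erase old).erase chosen
            + {(old.1 + 1, !old.2), (chosen.1 + 1, !chosen.2)}))

/-- the second reduction of `p`-th kind: the inverse of the second dilation of `p`-th kind -/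
def SecondReductionRel (ν ν' : Overpartition) (p : ℕ) : Prop := SecondDilationRel ν' ν p

/-- the set of overpartitions satisfying the conditions of `Ẽ_{k,i}` whose Gordon
marking has exactly `N r` `r`-marked parts for `1 ≤ r ≤ k-1` -/
def ESetN (k i : ℕ) (N : ℕ → ℕ) : Set Overpartition :=
  {l | ECond k i l ∧ (∀ r, 1 ≤ r → r ≤ k-1 → gordonN l r = N r) ∧
    l.parts = ∑ j ∈ Finset.Icc 1 (k-1), N j}

def GSetN (k i : ℕ) (N : ℕ → ℕ) : Set Overpartition :=
  {l ∈ ESetN k i N | SmallestNonOverlined l}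

def HSetN (k i : ℕ) (N : ℕ → ℕ) : Set Overpartition :=
  {l ∈ ESetN k i N | SmallestOverlined l}

def BSetN (k i : ℕ) (N : ℕ → ℕ) : Set Overpartition :=
  {l ∈ GSetN k i N | NoOverlined l}

/-- the set of overpartitions satisfying the conditions of `Õ_{k,i}` whose
Göllnitz–Gordon marking has exactly `N r` `r`-marked parts for `1 ≤ r ≤ k-1` -/
def OSetN (k i : ℕ) (N : ℕ → ℕ) : Set Overpartition :=
  {l | OCond k i l ∧ (∀ r, 1 ≤ r → r ≤ k-1 → ggN l r = N r) ∧
    l.parts = ∑ j ∈ Finset.Icc 1 (k-1), N j}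

def WSetN (k i : ℕ) (N : ℕ → ℕ) : Set Overpartition :=
  {l ∈ OSetN k i N | NoOdd l}

/-- `(a;q)_n = ∏_{j=0}^{n-1} (1 - a q^j)` -/
noncomputable def qPoch (a q : ℂ) (n : ℕ) : ℂ := ∏ j ∈ Finset.range n, (1 - a * q ^ j)

/-- `(a;q)_∞ = ∏_{j=0}^{∞} (1 - a q^j)` -/
noncomputable def qPochInf (a q : ℂ) : ℂ := ∏' j : ℕ, (1 - a * q ^ j)

/-- `(a;q)_{n-1} = (a;q)_n / (1 - a q^{n-1})`, the standard meaning of a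
`q`-Pochhammer symbol with subscript `n - 1` (also for `n = 0`). -/
noncomputable def qPochSub1 (a q : ℂ) (n : ℕ) : ℂ := qPoch a q n / (1 - a * q ^ ((n : ℤ) - 1))

/-- sequences `N` with `N 1 ≥ N 2 ≥ ⋯ ≥ N (k-1) ≥ 0` (and `N j = 0` otherwise),
encoding the summation indices `N₁ ≥ ⋯ ≥ N_{k-1} ≥ 0` -/
def DecSeq (k : ℕ) : Set (ℕ → ℕ) :=
  {N | N 0 = 0 ∧ (∀ j, 1 ≤ j → N (j+1) ≤ N j) ∧ (∀ j, k ≤ j → N j = 0)}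

def doubleEmb : ℕ ↪ ℕ := ⟨fun t => 2 * t, mul_right_injective₀ two_ne_zero⟩

/-- doubling every part of an overpartition -/
noncomputable def double (l : Overpartition) : Overpartition where
  f := Finsupp.embDomain doubleEmb l.f
  fbar := Finsupp.embDomain doubleEmb l.fbar
  fbar_le_one := by
    intro t
    by_cases h : ∃ s, 2 * s = t
    · obtain ⟨s, rfl⟩ := h
      exact (Finsupp.embDomain_apply_self doubleEmb l.fbar s).trans_le (l.fbar_le_one s)
    · rw [Finsupp.embDomain_notin_range]
      · exact Nat.zero_le _
      · rintro ⟨s, rfl⟩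
        exact h ⟨s, rfl⟩
  f_zero := (Finsupp.embDomain_apply_self doubleEmb l.f 0).trans l.f_zero
  fbar_zero := (Finsupp.embDomain_apply_self doubleEmb l.fbar 0).trans l.fbar_zero

/-!
Both identities come from one bijection `λ ↦ μ`: subtract `d` from every part of `λ` and
overline one copy of its smallest part, which must be non-overlined (`d = 0` for `i ≥ 2`;
`d = 1` for `i = 1`, where `f_1(λ) = 0` makes the smallest part at least `2`).

The Gordon mark of a part depends only on the sizes of the earlier parts and on whether its own
size is overlined, and the latter only matters when the next smaller size occurs, which is never
the case for the smallest part. Hence `μ` has the same numbers `N_r` of `r`-marked parts.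

In the conditions of `Ẽ_{k,i}`, the window sums `f_t + f_{t̄} + f_{t+1}` move along with the
parts, `V_t` grows by one from the smallest part on, and a window summing to `k - 1` loses
`d (k - 1)` from its weighted sum `t f_t + t f_{t̄} + (t+1) f_{t+1}`. This turns the parity
condition for `i` into the one for `i - 1` when `d = 0`, and the one for `1` into the one for
`k - 1` when `d = 1`. The weight drops by `d` times the number of parts.
-/

theorem Set.ncard_eq_of_relation {α β : Type*} {s : Set α} {t : Set β} (r : α → β → Prop)
    (hs : ∀ a ∈ s, ∃ b ∈ t, r a b) (ht : ∀ b ∈ t, ∃ a ∈ s, r a b)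
    (hleft : ∀ a a' b, r a b → r a' b → a = a')
    (hright : ∀ a b b', r a b → r a b' → b = b') :
    s.ncard = t.ncard := by
  choose g hg hrg using hs
  refine Set.ncard_congr g hg (fun a a' ha ha' h => ?_) fun b hb => ?_
  · exact hleft a a' _ (hrg a ha) (h ▸ hrg a' ha')
  · obtain ⟨a, ha, hab⟩ := ht b hb
    exact ⟨a, ha, hright a _ _ (hrg a ha) hab⟩

theorem Finsupp.sum_eq_sum_range {M N : Type*} [Zero N] [AddCommMonoid M] (g : ℕ →₀ N)
    (h0 : g 0 = 0) (φ : ℕ → N → M) (hφ : ∀ t, φ t 0 = 0) {B : ℕ}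
    (hB : ∀ t, B ≤ t → g (t+1) = 0) :
    g.sum φ = ∑ t ∈ Finset.range B, φ (t+1) (g (t+1)) := by
  rw [Finsupp.sum_of_support_subset g (s := Finset.range (B+1)) (fun t ht => ?_) φ
    (fun t _ => hφ t), Finset.sum_range_succ', h0, hφ, add_zero]
  rw [Finset.mem_range]
  by_contra hc
  obtain ⟨s, rfl⟩ : ∃ s, t = s + 1 := ⟨t - 1, by omega⟩
  exact Finsupp.mem_support_iff.1 ht (hB s (by omega))

theorem Finsupp.embDomain_addRightEmbedding_apply {M : Type*} [Zero M] (d : ℕ) (g : ℕ →₀ M)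
    (t : ℕ) : Finsupp.embDomain (addRightEmbedding d) g t = if d ≤ t then g (t - d) else 0 := by
  split_ifs with h
  · obtain ⟨s, rfl⟩ := Nat.exists_eq_add_of_le' h
    rw [Nat.add_sub_cancel, ← addRightEmbedding_apply, Finsupp.embDomain_apply_self]
  · exact Finsupp.embDomain_of_notMem_range _ _ _ fun ⟨s, hs⟩ => h (hs ▸ Nat.le_add_left d s)

theorem modEq_two_shift_iff {a c x v i i' : ℕ} (hi : 1 ≤ i) (h : i ≡ i' + 1 + c [MOD 2]) :
    a + c + x ≡ v + i - 1 [MOD 2] ↔ a + x ≡ v + 1 + i' - 1 [MOD 2] := by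
  unfold Nat.ModEq at *
  omega

namespace Overpartition

theorem ext {l m : Overpartition} (hf : ∀ t, l.f t = m.f t) (hfbar : ∀ t, l.fbar t = m.fbar t) :
    l = m := by
  obtain ⟨f, fbar, _, _, _⟩ := l
  obtain ⟨f', fbar', _, _, _⟩ := m
  obtain rfl : f = f' := Finsupp.ext hf
  obtain rfl : fbar = fbar' := Finsupp.ext hfbar
  rfl

theorem eq_zero_of_obound_le (l : Overpartition) {t : ℕ} (h : obound l ≤ t) :
    l.f t = 0 ∧ l.fbar t = 0 := by
  have hsup : ∀ s ∈ l.f.support ∪ l.fbar.support, s < obound l := fun s hs =>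
    Nat.lt_succ_of_le (Finset.le_sup (f := id) hs)
  simp only [Finset.mem_union, Finsupp.mem_support_iff] at hsup
  constructor <;> by_contra hne <;> have := hsup t (by tauto) <;> omega

theorem map_fst_partsListUpTo (l : Overpartition) (B : ℕ) :
    (partsListUpTo l B).map Prod.fst
      = (List.range B).flatMap fun t => List.replicate (l.fbar (t+1) + l.f (t+1)) (t+1) := by
  simp only [partsListUpTo, List.map_flatMap]
  congr 1
  funext t
  rcases Nat.le_one_iff_eq_zero_or_eq_one.1 (l.fbar_le_one (t+1)) with h | h <;>
    simp [h, List.replicate_add]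

theorem partsListUpTo_eq_partsList (l : Overpartition) {B : ℕ} (h : obound l ≤ B) :
    partsListUpTo l B = partsList l := by
  obtain ⟨c, rfl⟩ := Nat.exists_eq_add_of_le h
  simp only [partsList, partsListUpTo, List.range_add, List.flatMap_append,
    List.append_right_eq_self, List.flatMap_eq_nil_iff, List.mem_map, List.mem_range]
  rintro _ ⟨a, -, rfl⟩
  have := l.eq_zero_of_obound_le (t := obound l + a + 1) (by omega)
  simp [this]

theorem parts_eq_length_partsList (l : Overpartition) : l.parts = (partsList l).length := by
  have hB : ∀ t, obound l ≤ t → _ := fun t h => l.eq_zero_of_obound_le (t := t + 1) (by omega)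
  rw [← List.length_map (f := Prod.fst), partsList, map_fst_partsListUpTo, parts,
    Finsupp.sum_eq_sum_range l.f l.f_zero _ (fun _ => rfl) fun t h => (hB t h).1,
    Finsupp.sum_eq_sum_range l.fbar l.fbar_zero _ (fun _ => rfl) fun t h => (hB t h).2,
    ← Finset.sum_add_distrib, List.length_flatMap]
  simp only [List.length_replicate, add_comm (l.f _)]
  rfl

theorem wt_eq_sum_partsList (l : Overpartition) : l.wt = ((partsList l).map Prod.fst).sum := by
  have hB : ∀ t, obound l ≤ t → _ := fun t h => l.eq_zero_of_obound_le (t := t + 1) (by omega)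
  rw [partsList, map_fst_partsListUpTo, wt,
    Finsupp.sum_eq_sum_range l.f l.f_zero _ (fun _ => mul_zero _) fun t h => (hB t h).1,
    Finsupp.sum_eq_sum_range l.fbar l.fbar_zero _ (fun _ => mul_zero _) fun t h => (hB t h).2,
    ← Finset.sum_add_distrib, List.flatMap, List.sum_flatten, List.map_map]
  simp only [Function.comp_def, List.sum_replicate, smul_eq_mul, ← mul_add, mul_comm,
    add_comm (l.f _)]
  rfl

theorem pos_of_mem_partsList (l : Overpartition) {p : OPart} (hp : p ∈ partsList l) :
    0 < l.fbar p.1 + l.f p.1 := by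
  have := List.mem_map_of_mem (f := Prod.fst) hp
  rw [partsList, map_fst_partsListUpTo] at this
  simp only [List.mem_flatMap, List.mem_range, List.mem_replicate] at this
  obtain ⟨t, -, hne, ht⟩ := this
  rw [ht]
  omega

theorem wt_pos_of_fbar_pos (l : Overpartition) {t : ℕ} (h : 0 < l.fbar t) :
    0 < l.wt := by
  have ht : t ≠ 0 := by rintro rfl; simp [l.fbar_zero] at h
  have : t * l.fbar t ≤ l.fbar.sum fun t c => t * c :=
    Finset.single_le_sum (f := fun x => x * l.fbar x) (fun _ _ => Nat.zero_le _)
      (Finsupp.mem_support_iff.2 h.ne')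
  have := Nat.mul_pos (Nat.pos_of_ne_zero ht) h
  unfold wt
  omega

variable (l : Overpartition)

def window (t : ℕ) : ℕ := l.f t + l.fbar t + l.f (t + 1)

def WindowBounded (k : ℕ) : Prop := ∀ t, 1 ≤ t → l.window t ≤ k - 1

def WindowParity (k i : ℕ) : Prop :=
  ∀ t, 1 ≤ t → l.window t = k - 1 → t * (k - 1) + l.f (t + 1) ≡ l.V t + i - 1 [MOD 2]

theorem eCond_iff (k i : ℕ) :
    ECond k i l ↔ l.f 1 ≤ i - 1 ∧ l.WindowBounded k ∧ l.WindowParity k i := by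
  have key : ∀ t, t * l.f t + t * l.fbar t + (t + 1) * l.f (t + 1)
      = t * l.window t + l.f (t + 1) := fun t => by unfold window; ring
  simp only [ECond, key]
  exact and_congr_right' <| and_congr_right' <| forall_congr' fun t => imp_congr_right fun _ =>
    imp_congr_right fun h => by rw [show l.window t = k - 1 from h]

variable {l}

theorem window_eq_zero {s t : ℕ} (hlow : ∀ r < s, l.f r = 0 ∧ l.fbar r = 0) (h : t + 1 < s) :
    l.window t = 0 := by
  have := hlow t (by omega)
  have := hlow (t + 1) h
  simp_all [window]

theorem window_pred {s : ℕ} (hlow : ∀ r < s, l.f r = 0 ∧ l.fbar r = 0) (hs : 1 ≤ s) :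
    l.window (s - 1) = l.f s := by
  have := hlow (s - 1) (by omega)
  simp_all [window, Nat.sub_add_cancel hs]

theorem V_eq_zero {s t : ℕ} (hlow : ∀ r ≤ s, l.fbar r = 0) (h : t ≤ s) : l.V t = 0 :=
  Finset.sum_eq_zero fun r hr => hlow r (by simp at hr; omega)

theorem V_succ (t : ℕ) : l.V (t + 1) = l.V t + l.fbar (t + 1) :=
  Finset.sum_Icc_succ_top (by omega) _

end Overpartition

theorem markFold_map {markOf markOf' : List (OPart × ℕ) → OPart → ℕ} (φ : OPart → OPart)
    (P : OPart → Prop)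
    (h : ∀ acc p, (∀ q ∈ acc, P q.1) → P p →
      markOf' (acc.map (Prod.map φ id)) (φ p) = markOf acc p) :
    ∀ (L : List OPart) (acc : List (OPart × ℕ)), (∀ p ∈ L, P p) →
      (∀ q ∈ acc, P q.1) →
      markFold markOf' (L.map φ) (acc.map (Prod.map φ id))
        = (markFold markOf L acc).map (Prod.map φ id)
  | [], _, _, _ => rfl
  | p :: L, acc, hL, hacc => by
    have hp : P p := hL p List.mem_cons_self
    have hacc' : ∀ q ∈ acc ++ [(p, markOf acc p)], P q.1 := by
      intro q hq
      rcases List.mem_append.1 hq with hq | hq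
      · exact hacc q hq
      · rw [List.mem_singleton.1 hq]
        exact hp
    rw [List.map_cons, markFold, markFold, h acc p hacc hp]
    simpa using markFold_map φ P h L _ (fun p' hp' => hL p' (List.mem_cons_of_mem _ hp')) hacc'

theorem marksWhere_map (φ : OPart → OPart) (acc : List (OPart × ℕ)) (test : OPart → Bool) :
    marksWhere (acc.map (Prod.map φ id)) test = marksWhere acc (fun q => test (φ q)) := by
  simp [marksWhere, List.filter_map, Function.comp_def]

def shiftPart (d : ℕ) (p : OPart) : OPart := (p.1 + d, false)

theorem gordonMarkOf_shiftPart (d : ℕ) {l m : Overpartition} (acc : List (OPart × ℕ))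
    (p : OPart) (h : l.fbar (p.1 + d) = m.fbar p.1 ∨ ∀ q ∈ acc, q.1.1 + 1 ≠ p.1) :
    gordonMarkOf l (acc.map (Prod.map (shiftPart d) id)) (shiftPart d p)
      = gordonMarkOf m acc p := by
  simp only [gordonMarkOf, marksWhere_map, shiftPart, Nat.add_right_comm _ d 1, add_left_inj]
  rcases h with h | h
  · rw [h]
  · have : marksWhere acc (fun q => decide (q.1 + 1 = p.1)) = ∅ := by
      rw [marksWhere, List.filter_eq_nil_iff.2 fun q hq => by simpa using h q hq]
      rfl
    simp [this]

theorem length_filter_mark_map (φ : OPart → OPart) (L : List (OPart × ℕ)) (r : ℕ) :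
    ((L.map (Prod.map φ id)).filter fun q => decide (q.2 = r)).length
      = (L.filter fun q => decide (q.2 = r)).length := by
  simp [List.filter_map, Function.comp_def]

/-- `m` arises from `l` by subtracting `d` from every part and overlining one copy of the
smallest part, which becomes `u`. -/
structure ShiftOverline (d u : ℕ) (l m : Overpartition) : Prop where
  low : ∀ t < u + d, l.f t = 0 ∧ l.fbar t = 0
  f_eq : ∀ t, m.f t + (if t = u then 1 else 0) = l.f (t + d)
  fbar_eq : ∀ t, m.fbar t = l.fbar (t + d) + (if t = u then 1 else 0)

namespace ShiftOverline

open Overpartition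

variable {d u k i i' : ℕ} {l m : Overpartition}

theorem fbar_right (R : ShiftOverline d u l m) : m.fbar u = 1 := by
  have := R.fbar_eq u
  have := m.fbar_le_one u
  simp_all

theorem fbar_left (R : ShiftOverline d u l m) : l.fbar (u + d) = 0 := by
  have := R.fbar_eq u
  have := m.fbar_le_one u
  simp_all

theorem one_le (R : ShiftOverline d u l m) : 1 ≤ u :=
  Nat.one_le_iff_ne_zero.2 fun h => by simpa [h, m.fbar_zero] using R.fbar_right

theorem f_left (R : ShiftOverline d u l m) : l.f (u + d) = m.f u + 1 := by
  simpa using (R.f_eq u).symm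

theorem f_of_ne (R : ShiftOverline d u l m) {t : ℕ} (h : t ≠ u) : m.f t = l.f (t + d) := by
  simpa [h] using R.f_eq t

theorem fbar_of_ne (R : ShiftOverline d u l m) {t : ℕ} (h : t ≠ u) :
    m.fbar t = l.fbar (t + d) := by
  simpa [h] using R.fbar_eq t

theorem low_right (R : ShiftOverline d u l m) {t : ℕ} (h : t < u) :
    m.f t = 0 ∧ m.fbar t = 0 := by
  rw [R.f_of_ne h.ne, R.fbar_of_ne h.ne]
  exact R.low (t + d) (by omega)

theorem smallestNonOverlined (R : ShiftOverline d u l m) : SmallestNonOverlined l :=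
  ⟨u + d, by have := R.f_eq u; simp at this; omega, R.fbar_left, R.low⟩

theorem smallestOverlined (R : ShiftOverline d u l m) : SmallestOverlined m :=
  ⟨u, by simp [R.fbar_right], fun _ ht => R.low_right ht⟩

theorem map_fst_partsList (R : ShiftOverline d u l m) :
    (partsList l).map Prod.fst = ((partsList m).map Prod.fst).map (· + d) := by
  set B := obound l + obound m
  have hcount : ∀ t, m.fbar t + m.f t = l.fbar (t + d) + l.f (t + d) := fun t => by
    have := R.f_eq t
    have := R.fbar_eq t
    omega
  rw [← partsListUpTo_eq_partsList l (B := d + B) (by omega),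
    ← partsListUpTo_eq_partsList m (B := B) (by omega), map_fst_partsListUpTo,
    map_fst_partsListUpTo, List.range_add, List.flatMap_append, List.map_flatMap,
    List.flatMap_eq_nil_iff.2 fun t ht => ?_, List.nil_append, List.flatMap_map]
  · congr 1
    funext t
    rw [List.map_replicate, hcount, show d + t + 1 = t + 1 + d by omega]
  · have := R.low (t + 1) (by have := R.one_le; simp at ht; omega)
    simp [this]

theorem parts_eq (R : ShiftOverline d u l m) : m.parts = l.parts := by
  simpa [parts_eq_length_partsList] using (congrArg List.length R.map_fst_partsList).symm

theorem wt_add (R : ShiftOverline d u l m) : m.wt + d * l.parts = l.wt := by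
  rw [Overpartition.wt_eq_sum_partsList, Overpartition.wt_eq_sum_partsList, ← R.parts_eq,
    Overpartition.parts_eq_length_partsList, R.map_fst_partsList, List.sum_map_add]
  simp [Function.comp_def, mul_comm]

theorem gordonN_eq (R : ShiftOverline d u l m) (r : ℕ) : gordonN m r = gordonN l r := by
  have hsize : ∀ p ∈ partsList m, u ≤ p.1 := fun p hp => by
    have := m.pos_of_mem_partsList hp
    by_contra h
    have := R.low_right (not_le.1 h)
    omega
  have hm := markFold_map (markOf := gordonMarkOf m) (shiftPart d) (fun p => u ≤ p.1)
    (fun acc p hacc hp => gordonMarkOf_shiftPart d acc p <| by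
      rcases eq_or_ne p.1 u with h | h
      · exact Or.inr fun q hq => by have := hacc q hq; omega
      · exact Or.inl (R.fbar_of_ne h).symm)
    (partsList m) [] hsize (by simp)
  have hl := markFold_map (markOf := gordonMarkOf l) (shiftPart 0) (fun _ => True)
    (fun acc p _ _ => gordonMarkOf_shiftPart 0 acc p (Or.inl rfl)) (partsList l) []
    (by simp) (by simp)
  have hlist : (partsList m).map (shiftPart d) = (partsList l).map (shiftPart 0) := by
    rw [show shiftPart d = fun p => (p.1 + d, false) from rfl,
      show shiftPart 0 = fun p => (p.1 + 0, false) from rfl]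
    simpa [Function.comp_def] using
      (congrArg (List.map fun s => (s, false)) R.map_fst_partsList).symm
  rw [gordonN, gordonN, gordonMarked, gordonMarked, ← length_filter_mark_map (shiftPart d),
    ← length_filter_mark_map (shiftPart 0) (markFold _ (partsList l) [])]
  simp only [List.map_nil] at hm hl
  rw [← hm, ← hl, hlist]

theorem window_of_le (R : ShiftOverline d u l m) {t : ℕ} (h : u ≤ t) :
    m.window t = l.window (t + d) := by
  have := R.f_eq t
  have := R.fbar_eq t
  rw [window, window, R.f_of_ne (show t + 1 ≠ u by omega), show t + d + 1 = t + 1 + d by omega]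
  split_ifs at * <;> omega

theorem V_eq (R : ShiftOverline d u l m) (t : ℕ) :
    m.V t = l.V (t + d) + if u ≤ t then 1 else 0 := by
  induction t with
  | zero =>
    have := R.one_le
    rw [if_neg (by omega), zero_add, V_eq_zero (s := d) (fun r hr => (R.low r (by omega)).2) le_rfl]
    simp [Overpartition.V]
  | succ t ih =>
    rw [V_succ, ih, R.fbar_eq, Nat.add_right_comm t 1 d, V_succ]
    split_ifs <;> omega

theorem V_of_le (R : ShiftOverline d u l m) {t : ℕ} (h : u ≤ t) : m.V t = l.V (t + d) + 1 := by
  rw [R.V_eq, if_pos h]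

theorem windowBounded_iff (R : ShiftOverline d u l m) :
    l.WindowBounded k ↔ m.WindowBounded k := by
  have hu := R.one_le
  constructor
  · intro h t ht
    rcases lt_or_ge t u with htu | htu
    · by_cases htu : t + 1 < u
      · simp [window_eq_zero (fun _ hs => R.low_right hs) htu]
      · replace htu : t + 1 = u := by omega
        have hw := window_pred (fun _ hs => R.low_right hs) hu
        rw [← htu, Nat.add_sub_cancel] at hw
        have := h (u + d) (by omega)
        simp only [window, R.f_left] at this
        rw [hw, htu]
        omega
    · rw [R.window_of_le htu]
      exact h (t + d) (by omega)
  · intro h t ht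
    rcases lt_or_ge (t + 1) (u + d) with htu | htu
    · simp [window_eq_zero R.low htu]
    · rcases eq_or_lt_of_le htu with htu | htu
      · have := h u hu
        rw [show t = u + d - 1 by omega, window_pred R.low (by omega), R.f_left]
        simp only [window, R.fbar_right] at this
        omega
      · obtain ⟨s, rfl⟩ : ∃ s, t = s + d := ⟨t - d, by omega⟩
        rw [← R.window_of_le (by omega)]
        exact h s (by omega)

theorem parity_shift_iff (R : ShiftOverline d u l m) (hi : 1 ≤ i)
    (hii' : i ≡ i' + 1 + d * (k - 1) [MOD 2]) {t : ℕ} (ht : u ≤ t) :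
    (t + d) * (k - 1) + l.f (t + d + 1) ≡ l.V (t + d) + i - 1 [MOD 2] ↔
      t * (k - 1) + m.f (t + 1) ≡ m.V t + i' - 1 [MOD 2] := by
  rw [R.f_of_ne (show t + 1 ≠ u by omega), R.V_of_le ht, add_mul, Nat.add_right_comm t 1 d]
  exact modEq_two_shift_iff hi hii'

/-- The window ending at the smallest part `u + d` of `l` has no counterpart in `m`: there `l`
has only that part, so its condition is the one of the window starting at `u` in `m`. -/
theorem windowParity_of_pred (R : ShiftOverline d u l m) (hi : 1 ≤ i)
    (hii' : i ≡ i' + 1 + d * (k - 1) [MOD 2]) (hb : l.WindowBounded k)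
    (h : m.WindowParity k i') {t : ℕ} (ht : t + 1 = u + d) (hw : l.window t = k - 1) :
    t * (k - 1) + l.f (t + 1) ≡ l.V t + i - 1 [MOD 2] := by
  have hwt := window_pred R.low (s := u + d) (by omega)
  rw [show u + d - 1 = t by omega, hw] at hwt
  have hnext : l.f (u + d + 1) = 0 := by
    have := hb (u + d) (by have := R.one_le; omega)
    simp only [window] at this
    omega
  have hwu : m.window u = k - 1 := by
    rw [R.window_of_le le_rfl, window, R.fbar_left, hnext]
    omega
  have hbar : ∀ r ≤ u + d, l.fbar r = 0 := fun r hr =>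
    (lt_or_eq_of_le hr).elim (fun hr => (R.low r hr).2) fun hr => hr ▸ R.fbar_left
  have := (R.parity_shift_iff hi hii' le_rfl).2 (h u R.one_le hwu)
  rw [hnext, V_eq_zero hbar le_rfl] at this
  rw [V_eq_zero hbar (by omega), ht, ← hwt, ← add_one_mul, ht]
  simpa using this

theorem windowParity_iff (R : ShiftOverline d u l m) (hk : 2 ≤ k) (hi : 1 ≤ i)
    (hii' : i ≡ i' + 1 + d * (k - 1) [MOD 2]) (hb : l.WindowBounded k) :
    l.WindowParity k i ↔ m.WindowParity k i' := by
  have hu := R.one_le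
  constructor
  · intro h t ht hw
    by_cases htu : u ≤ t
    · rw [R.window_of_le htu] at hw
      exact (R.parity_shift_iff hi hii' htu).1 (h (t + d) (by omega) hw)
    by_cases htu' : t + 1 < u
    · simp [window_eq_zero (fun _ hs => R.low_right hs) htu'] at hw
      omega
    · have hw' := window_pred (fun _ hs => R.low_right hs) hu
      rw [show u - 1 = t by omega, hw] at hw'
      have := hb (u + d) (by omega)
      simp only [window, R.f_left] at this
      omega
  · intro h t ht hw
    by_cases htu : u + d ≤ t
    · obtain ⟨s, rfl⟩ : ∃ s, t = s + d := ⟨t - d, by omega⟩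
      rw [← R.window_of_le (by omega)] at hw
      exact (R.parity_shift_iff hi hii' (by omega)).2 (h s (by omega) hw)
    by_cases htu' : t + 1 < u + d
    · simp [window_eq_zero R.low htu'] at hw
      omega
    exact R.windowParity_of_pred hi hii' hb h (by omega) hw

theorem eCond_iff (R : ShiftOverline d u l m) (hk : 2 ≤ k) (hi : 1 ≤ i)
    (hii' : i ≡ i' + 1 + d * (k - 1) [MOD 2])
    (hone : l.WindowBounded k → (l.f 1 ≤ i - 1 ↔ m.f 1 ≤ i' - 1)) :
    ECond k i l ↔ ECond k i' m := by
  rw [Overpartition.eCond_iff, Overpartition.eCond_iff, ← R.windowBounded_iff]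
  constructor
  · rintro ⟨h1, hb, hp⟩
    exact ⟨(hone hb).1 h1, hb, (R.windowParity_iff hk hi hii' hb).1 hp⟩
  · rintro ⟨h1, hb, hp⟩
    exact ⟨(hone hb).2 h1, hb, (R.windowParity_iff hk hi hii' hb).2 hp⟩

theorem eCond_iff_of_shift_zero (R : ShiftOverline 0 u l m) (hk : 2 ≤ k) (hi : 2 ≤ i) :
    ECond k i l ↔ ECond k (i - 1) m :=
  R.eCond_iff hk (by omega) (by simp [Nat.ModEq]; omega) fun _ => by
    have h1 := R.f_eq 1
    rw [add_zero] at h1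
    by_cases hu : 1 = u
    · rw [if_pos hu] at h1
      omega
    · have := (R.low 1 (by have := R.one_le; omega)).1
      rw [if_neg hu] at h1
      omega

theorem eCond_iff_of_shift_one (R : ShiftOverline 1 u l m) (hk : 2 ≤ k) :
    ECond k 1 l ↔ ECond k (k - 1) m :=
  R.eCond_iff hk le_rfl (by unfold Nat.ModEq; omega) fun hb => by
    have hl : l.f 1 = 0 := (R.low 1 (by have := R.one_le; omega)).1
    have := R.windowBounded_iff.1 hb 1 le_rfl
    rcases eq_or_ne u 1 with rfl | hu
    · simp only [window, R.fbar_right] at this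
      omega
    · simp only [window, (R.low_right (show 1 < u by have := R.one_le; omega)).1] at this ⊢
      omega

theorem mem_GSetN_iff {N : ℕ → ℕ} (R : ShiftOverline d u l m)
    (hE : ECond k i l ↔ ECond k i' m) :
    l ∈ GSetN k i N ↔ m ∈ HSetN k i' N := by
  simp [GSetN, HSetN, ESetN, hE, R.gordonN_eq, R.parts_eq, R.smallestNonOverlined,
    R.smallestOverlined]

theorem left_unique {u' : ℕ} {l' : Overpartition} (R : ShiftOverline d u l m)
    (R' : ShiftOverline d u' l' m) : l = l' := by
  obtain rfl : u = u' := by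
    by_contra h
    rcases Nat.lt_or_gt_of_ne h with h | h
    · simpa [R.fbar_right] using (R'.low_right h).2
    · simpa [R'.fbar_right] using (R.low_right h).2
  refine Overpartition.ext (fun t => ?_) fun t => ?_
  all_goals
    by_cases ht : t < u + d
    · simp [(R.low t ht), (R'.low t ht)]
    obtain ⟨s, rfl⟩ : ∃ s, t = s + d := ⟨t - d, by omega⟩
  · rw [← R.f_eq, ← R'.f_eq]
  · have := R.fbar_eq s
    have := R'.fbar_eq s
    omega

theorem right_unique {u' : ℕ} {m' : Overpartition} (R : ShiftOverline d u l m)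
    (R' : ShiftOverline d u' l m') : m = m' := by
  obtain rfl : u = u' := by
    by_contra h
    rcases Nat.lt_or_gt_of_ne h with h | h
    · have := R.f_left
      simp_all [(R'.low (u + d) (by omega)).1]
    · have := R'.f_left
      simp_all [(R.low (u' + d) (by omega)).1]
  refine Overpartition.ext (fun t => ?_) fun t => ?_
  · have := R.f_eq t
    have := R'.f_eq t
    omega
  · rw [R.fbar_eq, R'.fbar_eq]

theorem exists_of_smallestNonOverlined (d : ℕ) (hl : SmallestNonOverlined l)
    (hd : ∀ t ≤ d, l.f t = 0) : ∃ u m, ShiftOverline d u l m := by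
  obtain ⟨s, hpos, hbar, hlow⟩ := hl
  have hds : d < s := by by_contra h; simp [hd s (by omega)] at hpos
  have hinj : ∀ g : ℕ →₀ ℕ, Set.InjOn (· + d) ((· + d) ⁻¹' g.support) :=
    fun _ => (add_left_injective d).injOn
  let m : Overpartition :=
    { f := Finsupp.comapDomain (· + d) l.f (hinj _) - Finsupp.single (s - d) 1
      fbar := Finsupp.comapDomain (· + d) l.fbar (hinj _) + Finsupp.single (s - d) 1
      fbar_le_one := fun t => by
        have := l.fbar_le_one (t + d)
        rw [Finsupp.add_apply, Finsupp.comapDomain_apply, Finsupp.single_apply]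
        split_ifs with h
        · simp [← h, Nat.sub_add_cancel hds.le, hbar]
        · omega
      f_zero := by simp [Finsupp.comapDomain_apply, hd d le_rfl]
      fbar_zero := by
        simp [Finsupp.comapDomain_apply, (hlow d hds).2, Nat.sub_ne_zero_of_lt hds] }
  refine ⟨s - d, m, ⟨by rwa [Nat.sub_add_cancel hds.le], fun t => ?_, fun t => ?_⟩⟩
  · simp only [m, Finsupp.tsub_apply, Finsupp.comapDomain_apply, Finsupp.single_apply]
    split_ifs with h h' h'
    · subst h'
      rw [Nat.sub_add_cancel hds.le]
      omega
    all_goals omega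
  · simp only [m, Finsupp.add_apply, Finsupp.comapDomain_apply, Finsupp.single_apply, eq_comm]

theorem exists_of_smallestOverlined (d : ℕ) (hm : SmallestOverlined m) :
    ∃ u l, ShiftOverline d u l m := by
  obtain ⟨u, hpos, hlow⟩ := hm
  have hbar : m.fbar u = 1 := le_antisymm (m.fbar_le_one u) hpos
  have hu : u ≠ 0 := by rintro rfl; simp [m.fbar_zero] at hpos
  let l : Overpartition :=
    { f := Finsupp.embDomain (addRightEmbedding d) (m.f + Finsupp.single u 1)
      fbar := Finsupp.embDomain (addRightEmbedding d) (m.fbar - Finsupp.single u 1)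
      fbar_le_one := fun t => by
        rw [Finsupp.embDomain_addRightEmbedding_apply]
        split_ifs
        · exact (tsub_le_self).trans (m.fbar_le_one _)
        · exact zero_le_one
      f_zero := by
        simp [Finsupp.embDomain_addRightEmbedding_apply, m.f_zero, hu]
      fbar_zero := by
        simp [Finsupp.embDomain_addRightEmbedding_apply, m.fbar_zero] }
  refine ⟨u, l, ⟨fun t ht => ?_, fun t => ?_, fun t => ?_⟩⟩
  all_goals simp only [l, Finsupp.embDomain_addRightEmbedding_apply, Finsupp.add_apply,
    Finsupp.tsub_apply, Finsupp.single_apply, Nat.le_add_left, if_true, Nat.add_sub_cancel]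
  · have := hlow (t - d) (by omega)
    split_ifs <;> omega
  · simp [eq_comm]
  · split_ifs with h <;> (try subst h) <;> omega

theorem ncard_eq (d : ℕ) {s t : Set Overpartition}
    (hs : ∀ l ∈ s, ∃ u, ∃ m ∈ t, ShiftOverline d u l m)
    (ht : ∀ m ∈ t, ∃ u, ∃ l ∈ s, ShiftOverline d u l m) : s.ncard = t.ncard :=
  Set.ncard_eq_of_relation (fun l m => ∃ u, ShiftOverline d u l m)
    (fun l hl => let ⟨u, m, hm, R⟩ := hs l hl; ⟨m, hm, u, R⟩)
    (fun m hm => let ⟨u, l, hl, R⟩ := ht m hm; ⟨l, hl, u, R⟩)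
    (fun _ _ _ ⟨_, R⟩ ⟨_, R'⟩ => R.left_unique R')
    (fun _ _ _ ⟨_, R⟩ ⟨_, R'⟩ => R.right_unique R')

end ShiftOverline

theorem G_eq_H_marked_general
    (k : ℕ) (N : ℕ → ℕ) (n : ℕ) :
    (∀ i, 2 ≤ i → i < k →
      {l : Overpartition | l.wt = n ∧ l ∈ GSetN k i N}.ncard
        = {l : Overpartition | l.wt = n ∧ l ∈ HSetN k (i-1) N}.ncard) ∧
    (1 < k →
      {l : Overpartition | l.wt = n ∧ l ∈ GSetN k 1 N}.ncard
        = {l : Overpartition |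
            l.wt = n - ∑ j ∈ Finset.Icc 1 (k-1), N j ∧ l ∈ HSetN k (k-1) N}.ncard) := by
  refine ⟨fun i hi hik => ShiftOverline.ncard_eq 0 ?_ ?_,
    fun hk => ShiftOverline.ncard_eq 1 ?_ ?_⟩
  · rintro l ⟨rfl, hl⟩
    obtain ⟨u, m, R⟩ := ShiftOverline.exists_of_smallestNonOverlined 0 hl.2 fun t ht => by
      rw [Nat.le_zero.1 ht, l.f_zero]
    have hE := R.eCond_iff_of_shift_zero (k := k) (by omega) hi
    exact ⟨u, m, ⟨by simpa using R.wt_add, (R.mem_GSetN_iff hE).1 hl⟩, R⟩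
  · rintro m ⟨rfl, hm⟩
    obtain ⟨u, l, R⟩ := ShiftOverline.exists_of_smallestOverlined 0 hm.2
    have hE := R.eCond_iff_of_shift_zero (k := k) (by omega) hi
    exact ⟨u, l, ⟨by simpa using R.wt_add.symm, (R.mem_GSetN_iff hE).2 hm⟩, R⟩
  · rintro l ⟨rfl, hl⟩
    obtain ⟨u, m, R⟩ := ShiftOverline.exists_of_smallestNonOverlined 1 hl.2 fun t ht => by
      rcases Nat.le_one_iff_eq_zero_or_eq_one.1 ht with rfl | rfl
      exacts [l.f_zero, Nat.le_zero.1 hl.1.1.1]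
    have hwt := R.wt_add
    have hparts : l.parts = _ := hl.1.2.2
    exact ⟨u, m, ⟨by omega, (R.mem_GSetN_iff (R.eCond_iff_of_shift_one hk)).1 hl⟩, R⟩
  · rintro m ⟨hwt, hm⟩
    obtain ⟨u, l, R⟩ := ShiftOverline.exists_of_smallestOverlined 1 hm.2
    have hl := (R.mem_GSetN_iff (R.eCond_iff_of_shift_one hk)).2 hm
    have hwt' := R.wt_add
    have hparts : l.parts = _ := hl.1.2.2
    have hpos := m.wt_pos_of_fbar_pos (R.fbar_right.symm ▸ one_pos)
    exact ⟨u, l, ⟨by omega, hl⟩, R⟩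

/-- `G̃_{N₁,…,N_{k-1};i}(n) = H̃_{N₁,…,N_{k-1};i-1}(n)` for `k > i ≥ 2`,
and `G̃_{N₁,…,N_{k-1};1}(n) = H̃_{N₁,…,N_{k-1};k-1}(n - N₁ - ⋯ - N_{k-1})` (Lemma 3.2). -/
theorem G_eq_H_marked
    (k : ℕ) (N : ℕ → ℕ) (hmono : ∀ j, 1 ≤ j → j + 2 ≤ k → N (j+1) ≤ N j) (n : ℕ) :
    (∀ i, 2 ≤ i → i < k →
      {l : Overpartition | l.wt = n ∧ l ∈ GSetN k i N}.ncard
        = {l : Overpartition | l.wt = n ∧ l ∈ HSetN k (i-1) N}.ncard) ∧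
    (1 < k →
      {l : Overpartition | l.wt = n ∧ l ∈ GSetN k 1 N}.ncard
        = {l : Overpartition |
            l.wt = n - ∑ j ∈ Finset.Icc 1 (k-1), N j ∧ l ∈ HSetN k (k-1) N}.ncard) :=
  G_eq_H_marked_general k N n
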